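/- arXiv:1611.04462 — 2 statements merged into one kernel-verified Lean document; each statement's English description precedes it below -/
import Mathlib

section
/- Let q ≥ 2 and let r : ℤ → ℂ be the ramp signal r(n) = n. Then (R_q r)(n) = −Σ_{l=0}^{q-1} l·c_q(l), a value independent of n; moreover this value equals Σ_{1 ≤ k ≤ q, gcd(k,q)=1} q/(1 − exp(2πik/q)). -/
open Finset

/-!
Write `c_q(l) = ∑_k ζ_k ^ l` with `ζ_k = exp (2πik/q)` running over the primitive `q`-th roots of
unity. Since `∑_{l<q} ζ^l = 0` for each of them, `∑_{l<q} c_q(l) = 0`, so convolving `c_q` with the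
ramp only leaves `-∑_{l<q} l c_q(l)`. Telescoping gives `(ζ - 1) ∑_{l<q} l ζ^l = q` because
`ζ^q = 1`, whence `-∑_{l<q} l ζ^l = q / (1 - ζ)`.
-/

noncomputable def ramanujanSum (q : ℕ) (n : ℤ) : ℂ :=
  ∑ k ∈ (Finset.Icc 1 q).filter (fun k => Nat.gcd k q = 1),
    Complex.exp (2 * Real.pi * Complex.I * (k : ℂ) * (n : ℂ) / (q : ℂ))

lemma sub_one_mul_sum_range_mul_pow {R : Type*} [CommRing R] (z : R) (n : ℕ) :
    (z - 1) * ∑ l ∈ range n, (l : R) * z ^ l = ((n : R) - 1) * z ^ n - ∑ l ∈ range n, z ^ l + 1 := by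
  induction n with
  | zero => simp
  | succ m ih =>
    rw [sum_range_succ, sum_range_succ, mul_add, ih]
    push_cast
    ring

lemma IsPrimitiveRoot.sum_range_mul_pow {K : Type*} [Field K] {ζ : K} {q : ℕ}
    (hζ : IsPrimitiveRoot ζ q) (hq : 1 < q) :
    ∑ l ∈ range q, (l : K) * ζ ^ l = q / (ζ - 1) := by
  rw [eq_div_iff (sub_ne_zero.mpr (hζ.ne_one hq)), mul_comm, sub_one_mul_sum_range_mul_pow,
    hζ.pow_eq_one, hζ.geom_sum_eq_zero hq]
  ring

section RamanujanSum

open Complex Real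

variable {q : ℕ}

lemma isPrimitiveRoot_exp_of_mem_filter_coprime (hq : q ≠ 0) {k : ℕ}
    (hk : k ∈ (Icc 1 q).filter (fun k => Nat.gcd k q = 1)) :
    IsPrimitiveRoot (exp (2 * π * I * k / q)) q := by
  rw [mul_div_assoc]
  exact isPrimitiveRoot_exp_of_coprime k q hq (mem_filter.mp hk).2

lemma ramanujanSum_natCast (q l : ℕ) :
    ramanujanSum q l = ∑ k ∈ (Icc 1 q).filter (fun k => Nat.gcd k q = 1),
      exp (2 * π * I * k / q) ^ l := by
  refine sum_congr rfl fun k _ => ?_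
  rw [← Complex.exp_nat_mul]
  congr 1
  push_cast
  ring

lemma sum_range_ramanujanSum (hq : 1 < q) : ∑ l ∈ range q, ramanujanSum q l = 0 := by
  simp_rw [ramanujanSum_natCast]
  rw [sum_comm]
  exact sum_eq_zero fun k hk =>
    (isPrimitiveRoot_exp_of_mem_filter_coprime (by omega) hk).geom_sum_eq_zero hq

lemma sum_range_mul_ramanujanSum (hq : 1 < q) :
    ∑ l ∈ range q, (l : ℂ) * ramanujanSum q l
      = ∑ k ∈ (Icc 1 q).filter (fun k => Nat.gcd k q = 1), q / (exp (2 * π * I * k / q) - 1) := by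
  simp_rw [ramanujanSum_natCast, mul_sum]
  rw [sum_comm]
  exact sum_congr rfl fun k hk =>
    (isPrimitiveRoot_exp_of_mem_filter_coprime (by omega) hk).sum_range_mul_pow hq

end RamanujanSum

theorem stmt6 (q : ℕ) (hq : 2 ≤ q) (r : ℤ → ℂ) (hr : ∀ n : ℤ, r n = (n : ℂ))
    (n : ℤ) :
    (∑ l ∈ Finset.range q, ramanujanSum q l * r (n - l))
      = -(∑ l ∈ Finset.range q, (l : ℂ) * ramanujanSum q l) ∧
    -(∑ l ∈ Finset.range q, (l : ℂ) * ramanujanSum q l)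
      = ∑ k ∈ (Finset.Icc 1 q).filter (fun k => Nat.gcd k q = 1),
          (q : ℂ) / (1 - Complex.exp (2 * Real.pi * Complex.I * (k : ℂ) / (q : ℂ))) := by
  constructor
  · calc ∑ l ∈ range q, ramanujanSum q l * r (n - l)
        = (∑ l ∈ range q, ramanujanSum q l) * n - ∑ l ∈ range q, (l : ℂ) * ramanujanSum q l := by
          rw [sum_mul, ← sum_sub_distrib]
          refine sum_congr rfl fun l _ => ?_
          rw [hr]
          push_cast
          ring
      _ = -∑ l ∈ range q, (l : ℂ) * ramanujanSum q l := by
          rw [sum_range_ramanujanSum hq]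
          ring
  · rw [sum_range_mul_ramanujanSum hq, ← sum_neg_distrib]
    refine sum_congr rfl fun k _ => ?_
    rw [← div_neg, neg_sub]
end

section
/- Let q ≥ 3 be odd and c̃_q(n) = c_q(n − (q−1)/2) for 0 ≤ n ≤ q−1. Then the quadratic sum Σ_{l=0}^{q-1} (n − l)² · c̃_q(l) is independent of n (a constant in n). -/
/-!
Writing `c l = c̃_q(l)`, the expansion `(n - l)² = n² - 2nl + l²` shows the sum equals
`n² Σ c l - 2n Σ l c l + Σ l² c l`, so it suffices that the zeroth and first moments of `c` vanish.
The zeroth moment is a sum over `k` of full geometric sums of the primitive `q`-th roots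
`exp(2πik/q)`, hence `0`. Since `c_q` is even and `l ↦ q - 1 - l` sends `l - (q-1)/2` to its
negative, reflecting the first moment gives `2 Σ l c l = (q - 1) Σ c l = 0`.
-/

open Finset

open Complex
open scoped Real

theorem sum_sub_sq_mul_eq_of_moments {ι R : Type*} [CommRing R] (s : Finset ι) (x g : ι → R)
    (h₀ : ∑ i ∈ s, g i = 0) (h₁ : ∑ i ∈ s, x i * g i = 0) (a : R) :
    ∑ i ∈ s, (a - x i) ^ 2 * g i = ∑ i ∈ s, x i ^ 2 * g i := by
  have expand : ∀ i ∈ s, (a - x i) ^ 2 * g i = a ^ 2 * g i - 2 * a * (x i * g i) + x i ^ 2 * g i :=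
    fun i _ => by ring
  rw [sum_congr rfl expand, sum_add_distrib, sum_sub_distrib, ← mul_sum, ← mul_sum, h₀, h₁]
  ring

theorem two_mul_sum_range_mul_eq_of_symm {R : Type*} [CommRing R] (q : ℕ) (g : ℕ → R)
    (hg : ∀ l < q, g (q - 1 - l) = g l) :
    2 * ∑ l ∈ range q, (l : R) * g l = ((q : R) - 1) * ∑ l ∈ range q, g l := by
  have reflect : ∑ l ∈ range q, (l : R) * g l = ∑ l ∈ range q, ((q : R) - 1 - l) * g l := by
    rw [← sum_range_reflect]
    refine sum_congr rfl fun l hl => ?_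
    have hl : l < q := mem_range.mp hl
    rw [hg l hl, Nat.cast_sub (by omega), Nat.cast_sub (by omega), Nat.cast_one]
  rw [two_mul, mul_sum]
  nth_rewrite 2 [reflect]
  rw [← sum_add_distrib]
  exact sum_congr rfl fun l _ => by ring

theorem ramanujanSum_eq_sum_zpow (q : ℕ) (n : ℤ) :
    ramanujanSum q n = ∑ k ∈ (Icc 1 q).filter (fun k => Nat.gcd k q = 1),
      exp (2 * π * I * (k / q)) ^ n := by
  refine sum_congr rfl fun k _ => ?_
  rw [← exp_int_mul]
  ring_nf

theorem of_mem_Icc_filter_coprime {q k : ℕ} (hq : 1 < q)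
    (hk : k ∈ (Icc 1 q).filter (fun k => Nat.gcd k q = 1)) : 1 ≤ k ∧ k < q ∧ k.Coprime q := by
  obtain ⟨⟨hk1, hkq⟩, hcop⟩ := by simpa only [mem_filter, mem_Icc] using hk
  refine ⟨hk1, lt_of_le_of_ne hkq ?_, hcop⟩
  rintro rfl
  rw [Nat.gcd_self] at hcop
  omega

theorem ramanujanSum_neg {q : ℕ} (hq : 1 < q) (n : ℤ) :
    ramanujanSum q (-n) = ramanujanSum q n := by
  have hq₀ : (q : ℂ) ≠ 0 := by exact_mod_cast (by omega : q ≠ 0)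
  simp only [ramanujanSum_eq_sum_zpow]
  have reflect_mem : ∀ k ∈ (Icc 1 q).filter (fun k => Nat.gcd k q = 1),
      q - k ∈ (Icc 1 q).filter (fun k => Nat.gcd k q = 1) := by
    intro k hk
    obtain ⟨hk1, hkq, hcop⟩ := of_mem_Icc_filter_coprime hq hk
    simp only [mem_filter, mem_Icc]
    exact ⟨⟨by omega, by omega⟩, (Nat.coprime_self_sub_left hkq.le).mpr hcop⟩
  refine sum_nbij' (q - ·) (q - ·) reflect_mem reflect_mem ?_ ?_ ?_ <;> intro k hk <;>
    obtain ⟨hk1, hkq, hcop⟩ := of_mem_Icc_filter_coprime hq hk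
  · omega
  · omega
  · have harg : 2 * π * I * (((q - k : ℕ) : ℂ) / q) = 2 * π * I - 2 * π * I * (k / q) := by
      rw [Nat.cast_sub hkq.le]; field_simp
    rw [harg, exp_sub, exp_two_pi_mul_I, one_div, inv_zpow']

theorem sum_range_ramanujanSum_sub {q : ℕ} (hq : 1 < q) (h : ℤ) :
    ∑ l ∈ range q, ramanujanSum q (l - h) = 0 := by
  simp only [ramanujanSum_eq_sum_zpow]
  rw [sum_comm]
  refine sum_eq_zero fun k hk => ?_
  obtain ⟨-, -, hcop⟩ := of_mem_Icc_filter_coprime hq hk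
  have hζ := isPrimitiveRoot_exp_of_coprime k q (by omega) hcop
  set ζ := exp (2 * π * I * (k / q))
  calc ∑ l ∈ range q, ζ ^ ((l : ℤ) - h) = (∑ l ∈ range q, ζ ^ l) * ζ ^ (-h) := by
        rw [sum_mul]
        refine sum_congr rfl fun l _ => ?_
        rw [sub_eq_add_neg, zpow_add₀ (hζ.ne_zero (by omega)), zpow_natCast]
    _ = 0 := by rw [hζ.geom_sum_eq_zero hq, zero_mul]

theorem stmt11 (q : ℕ) (hq : 3 ≤ q) (hodd : Odd q) (n m : ℤ) :
    ∑ l ∈ Finset.range q, ((n : ℂ) - (l : ℂ)) ^ 2 * ramanujanSum q ((l : ℤ) - ((q : ℤ) - 1) / 2)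
      = ∑ l ∈ Finset.range q, ((m : ℂ) - (l : ℂ)) ^ 2 * ramanujanSum q ((l : ℤ) - ((q : ℤ) - 1) / 2) := by
  have hq₁ : 1 < q := by omega
  set c : ℕ → ℂ := fun l => ramanujanSum q ((l : ℤ) - ((q : ℤ) - 1) / 2)
  have zeroth : ∑ l ∈ range q, c l = 0 := sum_range_ramanujanSum_sub hq₁ _
  have c_reflect : ∀ l < q, c (q - 1 - l) = c l := by
    intro l hl
    obtain ⟨r, rfl⟩ := hodd
    simp only [c]
    rw [← ramanujanSum_neg hq₁]
    congr 1
    push_cast [Nat.cast_sub (by omega : l ≤ 2 * r + 1 - 1)]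
    omega
  have first : ∑ l ∈ range q, (l : ℂ) * c l = 0 := by
    have := two_mul_sum_range_mul_eq_of_symm q c c_reflect
    rwa [zeroth, mul_zero, mul_eq_zero, or_iff_right two_ne_zero] at this
  rw [sum_sub_sq_mul_eq_of_moments _ _ c zeroth first, sum_sub_sq_mul_eq_of_moments _ _ c zeroth first]
end
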